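/- Let B₀ be an invertible n×n complex matrix and let A₀ be the 2n×2n block matrix [[0, I], [B₀, 0]]. Then A₀ is diagonalizable if and only if B₀ is diagonalizable. -/

import Mathlib

open Matrix

/-- A square complex matrix is diagonalizable if it is similar to a diagonal matrix. -/
def IsDiagonalizable {m : Type*} [Fintype m] [DecidableEq m] (M : Matrix m m ℂ) : Prop :=
  ∃ P : Matrix m m ℂ, IsUnit P.det ∧ (P⁻¹ * M * P).IsDiag

/-!
Read diagonalizability as "the eigenspaces span the whole space". If `A₀ (x, y) = λ (x, y)`
then `y = λ x` and `B₀ x = λ² x`, so the first components of the eigenvectors of `A₀` are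
spanning eigenvectors of `B₀`. Conversely, if `B₀ x = s² x`, where `s ≠ 0` because `B₀` is
invertible, then `(x, s x)` and `(x, -s x)` are eigenvectors of `A₀` for `s` and `-s`, whose sum
and difference are `(2 x, 0)` and `(0, 2 s x)`.
-/

open Module End

section Eigenbasis

variable {m : Type*} [Fintype m] [DecidableEq m] {M : Matrix m m ℂ}

theorem IsDiagonalizable.iSup_eigenspace_eq_top (h : IsDiagonalizable M) :
    ⨆ μ, eigenspace (toLin' M) μ = ⊤ := by
  obtain ⟨P, hP, hD⟩ := h
  have : Invertible P := P.invertibleOfIsUnitDet hP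
  set d := (P⁻¹ * M * P).diag
  have hMP : M * P = P * diagonal d := by
    rw [hD.diagonal_diag, ← Matrix.mul_assoc, ← Matrix.mul_assoc, mul_inv_of_invertible,
      Matrix.one_mul]
  rw [eq_top_iff, ← ((Pi.basisFun ℂ m).map (P.toLinearEquiv' this)).span_eq, Submodule.span_le]
  rintro _ ⟨j, rfl⟩
  refine Submodule.mem_iSup_of_mem (d j) (mem_eigenspace_iff.2 ?_)
  rw [Basis.map_apply, Pi.basisFun_apply]
  change M *ᵥ (P *ᵥ Pi.single j 1) = d j • (P *ᵥ Pi.single j 1)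
  rw [mulVec_mulVec, hMP, ← mulVec_mulVec, diagonal_mulVec_single, ← smul_eq_mul,
    Pi.single_smul', mulVec_smul]

theorem isDiagonalizable_of_basis_of_eigenvectors {ι : Type*} (b : Basis ι ℂ (m → ℂ))
    (hb : ∀ i, ∃ μ : ℂ, M *ᵥ b i = μ • b i) : IsDiagonalizable M := by
  set b' := b.reindex (b.indexEquiv (Pi.basisFun ℂ m))
  choose ν hν using fun j => hb ((b.indexEquiv (Pi.basisFun ℂ m)).symm j)
  set P := (Pi.basisFun ℂ m).toMatrix b'
  have : Invertible P := Basis.invertibleToMatrix _ _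
  have hMP : M * P = P * diagonal ν := by
    ext i j
    rw [mul_diagonal]
    simpa [P, b', Matrix.mul_apply, Basis.toMatrix_apply, mulVec, dotProduct, mul_comm]
      using congrFun (hν j) i
  refine ⟨P, isUnit_det_of_invertible P, ?_⟩
  rw [Matrix.mul_assoc, hMP, ← Matrix.mul_assoc, inv_mul_of_invertible, Matrix.one_mul]
  exact isDiag_diagonal ν

theorem isDiagonalizable_iff_iSup_eigenspace_eq_top :
    IsDiagonalizable M ↔ ⨆ μ, eigenspace (toLin' M) μ = ⊤ := by
  refine ⟨IsDiagonalizable.iSup_eigenspace_eq_top, fun h => ?_⟩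
  have hspan : ⊤ ≤ Submodule.span ℂ {v | ∃ μ : ℂ, M *ᵥ v = μ • v} := by
    rw [← h]
    exact iSup_le fun μ v hv => Submodule.subset_span ⟨μ, mem_eigenspace_iff.1 hv⟩
  exact isDiagonalizable_of_basis_of_eigenvectors (Basis.ofSpan hspan)
    fun i => Basis.ofSpan_subset hspan ⟨i, rfl⟩

end Eigenbasis

theorem Sum.elim_smul_smul {α β R γ : Type*} [SMul R γ] (c : R) (a : α → γ) (b : β → γ) :
    Sum.elim (c • a) (c • b) = c • Sum.elim a b :=
  (Sum.comp_elim (c • ·) a b).symm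

section BlockMatrix

variable {m : Type*} [Fintype m] [DecidableEq m]

section CommRing

variable {R : Type*} [CommRing R] (B : Matrix m m R)

theorem fromBlocks_zero_one_mulVec_sumElim (x y : m → R) :
    fromBlocks 0 1 B 0 *ᵥ Sum.elim x y = Sum.elim y (B *ᵥ x) := by
  simp [fromBlocks_mulVec]

variable {B}

theorem comp_inl_mem_eigenspace_of_mem_eigenspace_fromBlocks {μ : R} {v : m ⊕ m → R}
    (hv : v ∈ eigenspace (toLin' (fromBlocks 0 1 B 0)) μ) :
    v ∘ Sum.inl ∈ eigenspace (toLin' B) (μ * μ) := by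
  rw [mem_eigenspace_iff, toLin'_apply, ← Sum.elim_comp_inl_inr v,
    fromBlocks_zero_one_mulVec_sumElim, ← Sum.elim_smul_smul, Sum.elim_eq_iff] at hv
  rw [mem_eigenspace_iff, toLin'_apply, hv.2, hv.1, smul_smul]

theorem iSup_eigenspace_eq_top_of_fromBlocks
    (h : ⨆ μ, eigenspace (toLin' (fromBlocks 0 1 B 0)) μ = ⊤) :
    ⨆ μ, eigenspace (toLin' B) μ = ⊤ := by
  let π := LinearMap.funLeft R R (Sum.inl : m → m ⊕ m)
  have hπ : Function.Surjective π :=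
    LinearMap.funLeft_surjective_of_injective R R _ Sum.inl_injective
  rw [eq_top_iff, ← LinearMap.range_eq_top.2 hπ, ← Submodule.map_top, ← h, Submodule.map_iSup]
  refine iSup_le fun μ => Submodule.map_le_iff_le_comap.2 fun v hv => ?_
  exact Submodule.mem_iSup_of_mem (μ * μ)
    (comp_inl_mem_eigenspace_of_mem_eigenspace_fromBlocks hv)

theorem sumElim_mem_eigenspace_fromBlocks {s : R} {x : m → R}
    (hx : B *ᵥ x = (s * s) • x) :
    Sum.elim x (s • x) ∈ eigenspace (toLin' (fromBlocks 0 1 B 0)) s := by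
  rw [mem_eigenspace_iff, toLin'_apply, fromBlocks_zero_one_mulVec_sumElim, hx, ← smul_smul,
    Sum.elim_smul_smul]

end CommRing

variable {K : Type*} [Field K] {B : Matrix m m K}

theorem sumElim_mem_sup_eigenspace_fromBlocks [NeZero (2 : K)] {s : K} (hs : s ≠ 0) {x : m → K}
    (hx : B *ᵥ x = (s * s) • x) :
    Sum.elim x (0 : m → K) ∈ eigenspace (toLin' (fromBlocks 0 1 B 0)) s ⊔
        eigenspace (toLin' (fromBlocks 0 1 B 0)) (-s) ∧
      Sum.elim (0 : m → K) x ∈ eigenspace (toLin' (fromBlocks 0 1 B 0)) s ⊔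
        eigenspace (toLin' (fromBlocks 0 1 B 0)) (-s) := by
  have hplus := sumElim_mem_eigenspace_fromBlocks hx
  have hminus := sumElim_mem_eigenspace_fromBlocks (s := -s) (by rwa [neg_mul_neg])
  constructor
  · convert Submodule.smul_mem _ (2⁻¹ : K) (Submodule.add_mem_sup hplus hminus) using 1
    rw [← Sum.elim_add_add, ← Sum.elim_smul_smul]
    congr 1 <;> match_scalars <;> field_simp <;> ring
  · convert Submodule.smul_mem _ (2 * s)⁻¹ (Submodule.sub_mem_sup hplus hminus) using 1
    rw [← Sum.elim_sub_sub, ← Sum.elim_smul_smul]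
    congr 1 <;> match_scalars <;> field_simp <;> ring

theorem iSup_eigenspace_fromBlocks_eq_top [IsAlgClosed K] [NeZero (2 : K)] (hB : IsUnit B)
    (h : ⨆ μ, eigenspace (toLin' B) μ = ⊤) :
    ⨆ μ, eigenspace (toLin' (fromBlocks 0 1 B 0)) μ = ⊤ := by
  set W := ⨆ μ, eigenspace (toLin' (fromBlocks 0 1 B 0)) μ
  let e := (LinearEquiv.sumArrowLequivProdArrow m m K K).symm.toLinearMap
  have hle : ∀ μ, eigenspace (toLin' B) μ ≤
      W.comap (e ∘ₗ LinearMap.inl K _ _) ⊓ W.comap (e ∘ₗ LinearMap.inr K _ _) := by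
    intro μ x hx
    rw [mem_eigenspace_iff, toLin'_apply] at hx
    rcases eq_or_ne μ 0 with rfl | hμ
    · obtain rfl : x = 0 := mulVec_injective_iff_isUnit.2 hB (by rw [hx, zero_smul, mulVec_zero])
      simp
    obtain ⟨s, hs⟩ := IsAlgClosed.exists_pow_nat_eq μ two_pos
    have hsup : eigenspace (toLin' (fromBlocks 0 1 B 0)) s ⊔
        eigenspace (toLin' (fromBlocks 0 1 B 0)) (-s) ≤ W :=
      sup_le (le_iSup _ s) (le_iSup _ (-s))
    obtain ⟨hinl, hinr⟩ := sumElim_mem_sup_eigenspace_fromBlocks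
      (ne_zero_pow two_ne_zero (hs.symm ▸ hμ)) (by rw [hx, ← hs, sq])
    exact ⟨hsup hinl, hsup hinr⟩
  have hmem x := iSup_le hle (h.ge (Submodule.mem_top (x := x)))
  rw [eq_top_iff]
  rintro v -
  have hv : v = e (v ∘ Sum.inl, 0) + e (0, v ∘ Sum.inr) := by
    ext (i | i) <;> simp [e]
  rw [hv]
  exact add_mem (hmem _).1 (hmem _).2

end BlockMatrix

theorem blockMatrix_diagonalizable_iff (n : ℕ) (B₀ : Matrix (Fin n) (Fin n) ℂ)
    (hB₀ : IsUnit B₀.det) :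
    IsDiagonalizable (Matrix.fromBlocks (0 : Matrix (Fin n) (Fin n) ℂ) 1 B₀ 0) ↔
      IsDiagonalizable B₀ := by
  rw [isDiagonalizable_iff_iSup_eigenspace_eq_top, isDiagonalizable_iff_iSup_eigenspace_eq_top]
  exact ⟨iSup_eigenspace_eq_top_of_fromBlocks,
    iSup_eigenspace_fromBlocks_eq_top ((isUnit_iff_isUnit_det B₀).2 hB₀)⟩
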